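/- The Euclidean plane ℝ² has Nagata dimension at most 2, witnessed by rescaled brick coverings: for every s > 0 there is a cover of ℝ² by congruent rectangles of diagonal proportional to s whose s-multiplicity is at most 3. -/

import Mathlib

open Metric Set

noncomputable section

/-- The word length of `g` with respect to a symmetrized generating set `S ∪ S⁻¹`. -/
noncomputable def wordLength {G : Type*} [Group G] (S : Set G) (g : G) : ℕ :=
  sInf {n : ℕ | ∃ l : List G, l.length = n ∧ (∀ x ∈ l, x ∈ S ∨ x⁻¹ ∈ S) ∧ l.prod = g}

/-- The word metric on a group with respect to a generating set `S`. -/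
noncomputable def wordDist {G : Type*} [Group G] (S : Set G) (a b : G) : ℝ :=
  (wordLength S (a⁻¹ * b) : ℝ)

/-- `AsdimLE d n` : the space with distance function `d` has asymptotic dimension at most `n`:
for every `D > 0` there are `B ≥ 0` and families `U 0, ..., U n` of subsets covering the space,
all of whose members have diameter at most `B`, and such that distinct members of the same
family are at mutual distance greater than `D`. -/
def AsdimLE {X : Type*} (d : X → X → ℝ) (n : ℕ) : Prop :=
  ∀ D : ℝ, 0 < D → ∃ B : ℝ, 0 ≤ B ∧ ∃ U : Fin (n + 1) → Set (Set X),
    (∀ x : X, ∃ i : Fin (n + 1), ∃ u ∈ U i, x ∈ u) ∧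
    (∀ i : Fin (n + 1), ∀ u ∈ U i, ∀ x ∈ u, ∀ y ∈ u, d x y ≤ B) ∧
    (∀ i : Fin (n + 1), ∀ u ∈ U i, ∀ v ∈ U i, u ≠ v → ∀ x ∈ u, ∀ y ∈ v, D < d x y)

/-- The asymptotic dimension of a space with distance function `d`, in `ℕ∞`. -/
noncomputable def asdimD {X : Type*} (d : X → X → ℝ) : ℕ∞ :=
  ⨅ (n : ℕ) (_ : AsdimLE d n), (n : ℕ∞)

/-- The asymptotic dimension of a pseudometric space. -/
noncomputable def asdim (X : Type*) [PseudoMetricSpace X] : ℕ∞ :=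
  asdimD (fun x y : X => dist x y)

/-- `NagataLE X n`: there is a constant `c` such that for all `s > 0`, `X` admits a
(`c·s`)-bounded cover with `s`-multiplicity at most `n + 1`. -/
def NagataLE (X : Type*) [PseudoMetricSpace X] (n : ℕ) : Prop :=
  ∃ c : ℝ, ∀ s : ℝ, 0 < s → ∃ U : Set (Set X),
    (∀ x : X, ∃ u ∈ U, x ∈ u) ∧
    (∀ u ∈ U, ∀ x ∈ u, ∀ y ∈ u, dist x y ≤ c * s) ∧
    (∀ T : Set X, (∀ x ∈ T, ∀ y ∈ T, dist x y ≤ s) →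
      {u | u ∈ U ∧ (u ∩ T).Nonempty}.encard ≤ (n + 1 : ℕ))

/-- The Nagata dimension of a metric space, in `ℕ∞`. -/
noncomputable def nagataDim (X : Type*) [PseudoMetricSpace X] : ℕ∞ :=
  ⨅ (n : ℕ) (_ : NagataLE X n), (n : ℕ∞)


/-- An axis-aligned closed rectangle in the Euclidean plane with lower-left corner `(a, b)`,
width `l2` and height `l1`. -/
def rect (a b l1 l2 : ℝ) : Set (EuclideanSpace ℝ (Fin 2)) :=
  {p | a ≤ p 0 ∧ p 0 ≤ a + l2 ∧ b ≤ p 1 ∧ p 1 ≤ b + l1}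

namespace BrickAux

abbrev E2 := EuclideanSpace ℝ (Fin 2)

lemma dist_coord_le (x y : E2) (i : Fin 2) : |x i - y i| ≤ dist x y := by
  rw [EuclideanSpace.dist_eq, ← Real.sqrt_sq_eq_abs]
  apply Real.sqrt_le_sqrt
  have h := Finset.single_le_sum (f := fun j => dist (x j) (y j) ^ 2)
    (fun j _ => sq_nonneg _) (Finset.mem_univ i)
  simpa [Real.dist_eq, sq_abs] using h

lemma dist_le_rect {a b l1 l2 : ℝ} {x y : E2} (hx : x ∈ rect a b l1 l2)
    (hy : y ∈ rect a b l1 l2) : dist x y ≤ Real.sqrt (l1 ^ 2 + l2 ^ 2) := by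
  obtain ⟨hx0, hx1, hx2, hx3⟩ := hx
  obtain ⟨hy0, hy1, hy2, hy3⟩ := hy
  rw [EuclideanSpace.dist_eq]
  apply Real.sqrt_le_sqrt
  rw [Fin.sum_univ_two]
  have h0 : dist (x 0) (y 0) ^ 2 ≤ l2 ^ 2 := by
    rw [Real.dist_eq, sq_abs]; nlinarith
  have h1 : dist (x 1) (y 1) ^ 2 ≤ l1 ^ 2 := by
    rw [Real.dist_eq, sq_abs]; nlinarith
  linarith

lemma indexA {w off m r : ℝ} (hw : 0 < w) (hrw : r < w) {i : ℤ}
    (h1 : w * i + off ≤ m + r) (h2 : m ≤ w * i + off + w) :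
    i = ⌊(m + r - off) / w⌋ - 1 ∨ i = ⌊(m + r - off) / w⌋ := by
  have hiK : i ≤ ⌊(m + r - off) / w⌋ := by
    apply Int.le_floor.mpr
    rw [le_div_iff₀ hw]
    nlinarith
  have hK1 : ⌊(m + r - off) / w⌋ < i + 2 := by
    apply Int.floor_lt.mpr
    rw [div_lt_iff₀ hw]
    push_cast
    nlinarith
  omega

lemma encard_triple {α : Type*} (a b c : α) : ({a, b, c} : Set α).encard ≤ 3 := by
  calc ({a, b, c} : Set α).encard ≤ ({b, c} : Set α).encard + 1 := Set.encard_insert_le _ _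
    _ ≤ (({c} : Set α).encard + 1) + 1 := by gcongr; exact Set.encard_insert_le _ _
    _ ≤ 3 := by rw [Set.encard_singleton]; norm_num

/-- The brick with indices `p = (i, j)` for scale `s`. -/
def brickF (s : ℝ) (p : ℤ × ℤ) : Set E2 :=
  rect (6 * s * p.1 + 3 * s * ((p.2 % 2 : ℤ) : ℝ)) (3 * s * p.2) (3 * s) (6 * s)

lemma brick_family (s : ℝ) (hs : 0 < s) :
    ∃ U : Set (Set E2),
      (∀ u ∈ U, ∃ a b : ℝ, u = rect a b (3 * s) (6 * s)) ∧
      (∀ x : E2, ∃ u ∈ U, x ∈ u) ∧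
      (∀ u ∈ U, ∀ x ∈ u, ∀ y ∈ u, dist x y ≤ Real.sqrt 45 * s) ∧
      (∀ T : Set E2, (∀ x ∈ T, ∀ y ∈ T, dist x y ≤ s) →
        {u | u ∈ U ∧ (u ∩ T).Nonempty}.encard ≤ 3) := by
  refine ⟨Set.range (brickF s), ?_, ?_, ?_, ?_⟩
  · rintro u ⟨⟨i, j⟩, rfl⟩
    exact ⟨_, _, rfl⟩
  · -- covering
    intro x
    set j : ℤ := ⌊x 1 / (3 * s)⌋ with hj
    set off : ℝ := 3 * s * ((j % 2 : ℤ) : ℝ) with hoff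
    set i : ℤ := ⌊(x 0 - off) / (6 * s)⌋ with hi
    refine ⟨brickF s (i, j), ⟨(i, j), rfl⟩, ?_, ?_, ?_, ?_⟩
    · have := Int.floor_le ((x 0 - off) / (6 * s))
      rw [le_div_iff₀ (by linarith : (0:ℝ) < 6 * s)] at this
      simp only [brickF]
      linarith
    · have := Int.lt_floor_add_one ((x 0 - off) / (6 * s))
      rw [div_lt_iff₀ (by linarith : (0:ℝ) < 6 * s)] at this
      simp only [brickF]
      push_cast at this ⊢
      nlinarith
    · have := Int.floor_le (x 1 / (3 * s))
      rw [le_div_iff₀ (by linarith : (0:ℝ) < 3 * s)] at this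
      simp only [brickF]
      linarith
    · have := Int.lt_floor_add_one (x 1 / (3 * s))
      rw [div_lt_iff₀ (by linarith : (0:ℝ) < 3 * s)] at this
      simp only [brickF]
      push_cast at this ⊢
      nlinarith
  · -- diameter
    rintro u ⟨⟨i, j⟩, rfl⟩ x hx y hy
    have h := dist_le_rect hx hy
    have h45 : (3 * s) ^ 2 + (6 * s) ^ 2 = 45 * s ^ 2 := by ring
    rw [h45] at h
    rwa [Real.sqrt_mul (by norm_num) (s ^ 2), Real.sqrt_sq hs.le] at h
  · -- multiplicity
    intro T hT
    rcases T.eq_empty_or_nonempty with rfl | ⟨t, ht⟩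
    · have : {u | u ∈ Set.range (brickF s) ∧ (u ∩ (∅ : Set E2)).Nonempty} = ∅ := by
        ext u; simp
      rw [this, Set.encard_empty]
      exact zero_le
    set m0 : ℝ := t 0 - s with hm0
    set m1 : ℝ := t 1 - s with hm1
    have hcoord : ∀ p ∈ T, m0 ≤ p 0 ∧ p 0 ≤ m0 + 2 * s ∧ m1 ≤ p 1 ∧ p 1 ≤ m1 + 2 * s := by
      intro p hp
      have hd := hT p hp t ht
      have h0 := (dist_coord_le p t 0).trans hd
      have h1 := (dist_coord_le p t 1).trans hd
      rw [abs_le] at h0 h1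
      refine ⟨by linarith [h0.2], by linarith [h0.1], by linarith [h1.2], by linarith [h1.1]⟩
    set J : ℤ := ⌊(m1 + 2 * s - 0) / (3 * s)⌋ with hJ
    set K : ℤ → ℤ := fun j => ⌊(m0 + 2 * s - 3 * s * ((j % 2 : ℤ) : ℝ)) / (6 * s)⌋ with hK
    -- every meeting brick has constrained indices
    have hmeet : ∀ i j : ℤ, (brickF s (i, j) ∩ T).Nonempty →
        (j = J - 1 ∨ j = J) ∧ (i = K j - 1 ∨ i = K j) := by
      rintro i j ⟨p, hpb, hpT⟩
      obtain ⟨h0l, h0r, h1l, h1r⟩ := hpb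
      obtain ⟨hc0, hc1, hc2, hc3⟩ := hcoord p hpT
      constructor
      · exact indexA (by linarith : (0:ℝ) < 3 * s) (by linarith : 2 * s < 3 * s)
          (show 3 * s * (j : ℝ) + 0 ≤ m1 + 2 * s by simp only [brickF] at h1l; linarith)
          (show m1 ≤ 3 * s * (j : ℝ) + 0 + 3 * s by simp only [brickF] at h1r; linarith)
      · exact indexA (by linarith : (0:ℝ) < 6 * s) (by linarith : 2 * s < 6 * s)
          (show 6 * s * (i : ℝ) + 3 * s * ((j % 2 : ℤ) : ℝ) ≤ m0 + 2 * s by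
            simp only [brickF] at h0l; linarith)
          (show m0 ≤ 6 * s * (i : ℝ) + 3 * s * ((j % 2 : ℤ) : ℝ) + 6 * s by
            simp only [brickF] at h0r; linarith)
    -- if both bricks of a row meet, the shared boundary is in the strip
    have hbound : ∀ j : ℤ, (brickF s (K j - 1, j) ∩ T).Nonempty →
        (brickF s (K j, j) ∩ T).Nonempty →
        m0 ≤ 6 * s * (K j : ℝ) + 3 * s * ((j % 2 : ℤ) : ℝ) ∧
        6 * s * (K j : ℝ) + 3 * s * ((j % 2 : ℤ) : ℝ) ≤ m0 + 2 * s := by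
      rintro j ⟨p, hpb, hpT⟩ ⟨q, hqb, hqT⟩
      obtain ⟨hp0, hp1, -, -⟩ := hpb
      obtain ⟨hq0, -, -, -⟩ := hqb
      obtain ⟨hpc, -, -, -⟩ := hcoord p hpT
      obtain ⟨-, hqc, -, -⟩ := hcoord q hqT
      simp only [brickF] at hp1 hq0
      push_cast at hp1 hq0 ⊢
      constructor <;> nlinarith
    -- not all four candidates can meet
    have hkey : ¬ ((brickF s (K (J - 1) - 1, J - 1) ∩ T).Nonempty ∧
        (brickF s (K (J - 1), J - 1) ∩ T).Nonempty ∧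
        (brickF s (K J - 1, J) ∩ T).Nonempty ∧ (brickF s (K J, J) ∩ T).Nonempty) := by
      rintro ⟨h1, h2, h3, h4⟩
      obtain ⟨hb0l, hb0r⟩ := hbound (J - 1) h1 h2
      obtain ⟨hb1l, hb1r⟩ := hbound J h3 h4
      set d : ℤ := 2 * (K (J - 1) - K J) + (J - 1) % 2 - J % 2 with hd
      have hdne : d ≠ 0 := by omega
      have heq : 6 * s * ((K (J - 1) : ℝ)) + 3 * s * (((J - 1) % 2 : ℤ) : ℝ) -
          (6 * s * ((K J : ℝ)) + 3 * s * ((J % 2 : ℤ) : ℝ)) = 3 * s * (d : ℝ) := by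
        push_cast [hd]; ring
      rcases hdne.lt_or_gt with hlt | hlt
      · have : (d : ℝ) ≤ -1 := by exact_mod_cast (by omega : d ≤ -1)
        nlinarith
      · have : (1 : ℝ) ≤ (d : ℝ) := by exact_mod_cast (by omega : 1 ≤ d)
        nlinarith
    -- conclude
    have main : ∀ (q q1 q2 q3 : ℤ × ℤ), ¬ (brickF s q ∩ T).Nonempty →
        (∀ i j : ℤ, (brickF s (i, j) ∩ T).Nonempty →
          (i, j) = q ∨ (i, j) = q1 ∨ (i, j) = q2 ∨ (i, j) = q3) →
        {u | u ∈ Set.range (brickF s) ∧ (u ∩ T).Nonempty}.encard ≤ 3 := by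
      intro q q1 q2 q3 hq hcase
      refine le_trans (Set.encard_le_encard (t := {brickF s q1, brickF s q2, brickF s q3}) ?_)
        (encard_triple _ _ _)
      rintro u ⟨⟨⟨i, j⟩, rfl⟩, hne⟩
      rcases hcase i j hne with h | h | h | h
      · exact absurd (h ▸ hne) hq
      · rw [h]; exact Or.inl rfl
      · rw [h]; exact Or.inr (Or.inl rfl)
      · rw [h]; exact Or.inr (Or.inr rfl)
    have hfour : ∀ i j : ℤ, (brickF s (i, j) ∩ T).Nonempty →
        (i, j) = (K (J - 1) - 1, J - 1) ∨ (i, j) = (K (J - 1), J - 1) ∨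
        (i, j) = (K J - 1, J) ∨ (i, j) = (K J, J) := by
      intro i j hne
      obtain ⟨hj, hi⟩ := hmeet i j hne
      rcases hj with rfl | rfl <;> rcases hi with rfl | rfl <;> simp
    by_cases h1 : (brickF s (K (J - 1) - 1, J - 1) ∩ T).Nonempty
    · by_cases h2 : (brickF s (K (J - 1), J - 1) ∩ T).Nonempty
      · by_cases h3' : (brickF s (K J - 1, J) ∩ T).Nonempty
        · exact main _ _ _ _ (fun h4 => hkey ⟨h1, h2, h3', h4⟩) (fun i j h => by
            rcases hfour i j h with h' | h' | h' | h'
            · exact Or.inr (Or.inl h')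
            · exact Or.inr (Or.inr (Or.inl h'))
            · exact Or.inr (Or.inr (Or.inr h'))
            · exact Or.inl h')
        · exact main _ _ _ _ h3' (fun i j h => by
            rcases hfour i j h with h' | h' | h' | h'
            · exact Or.inr (Or.inl h')
            · exact Or.inr (Or.inr (Or.inl h'))
            · exact Or.inl h'
            · exact Or.inr (Or.inr (Or.inr h')))
      · exact main _ _ _ _ h2 (fun i j h => by
          rcases hfour i j h with h' | h' | h' | h'
          · exact Or.inr (Or.inl h')
          · exact Or.inl h'
          · exact Or.inr (Or.inr (Or.inl h'))
          · exact Or.inr (Or.inr (Or.inr h')))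
    · exact main _ _ _ _ h1 hfour

end BrickAux

/-- The Euclidean plane has Nagata dimension at most `2`, witnessed by rescaled brick
coverings: for every `s > 0` there is a cover of `ℝ²` by congruent rectangles of diagonal
proportional to `s` whose `s`-multiplicity is at most `3`. -/
theorem stmt10 :
    nagataDim (EuclideanSpace ℝ (Fin 2)) ≤ 2 ∧
    ∃ c : ℝ, 0 < c ∧ ∀ s : ℝ, 0 < s → ∃ l1 l2 : ℝ, 0 < l1 ∧ l1 ≤ l2 ∧
      Real.sqrt (l1 ^ 2 + l2 ^ 2) = c * s ∧
      ∃ U : Set (Set (EuclideanSpace ℝ (Fin 2))),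
        (∀ u ∈ U, ∃ a b : ℝ, u = rect a b l1 l2) ∧
        (∀ x : EuclideanSpace ℝ (Fin 2), ∃ u ∈ U, x ∈ u) ∧
        ∀ T : Set (EuclideanSpace ℝ (Fin 2)), (∀ x ∈ T, ∀ y ∈ T, dist x y ≤ s) →
          {u | u ∈ U ∧ (u ∩ T).Nonempty}.encard ≤ 3 := by
  obtain ⟨c, hc⟩ : ∃ c : ℝ, 0 < c ∧ c = Real.sqrt 45 := ⟨Real.sqrt 45, by positivity, rfl⟩
  obtain ⟨hcpos, rfl⟩ := hc
  have hfam := BrickAux.brick_family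
  constructor
  · have h2 : NagataLE (EuclideanSpace ℝ (Fin 2)) 2 := by
      refine ⟨Real.sqrt 45, fun s hs => ?_⟩
      obtain ⟨U, _, hcov, hdiam, hmult⟩ := hfam s hs
      exact ⟨U, hcov, hdiam, fun T hT => le_trans (hmult T hT) (by norm_num)⟩
    have : (⨅ (n : ℕ) (_ : NagataLE (EuclideanSpace ℝ (Fin 2)) n), (n : ℕ∞)) ≤ ((2 : ℕ) : ℕ∞) :=
      iInf₂_le 2 h2
    exact le_trans this (by norm_num)
  · refine ⟨Real.sqrt 45, hcpos, fun s hs => ⟨3 * s, 6 * s, by linarith, by linarith, ?_, ?_⟩⟩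
    · rw [show (3 * s) ^ 2 + (6 * s) ^ 2 = 45 * s ^ 2 by ring,
        Real.sqrt_mul (by norm_num) (s ^ 2), Real.sqrt_sq hs.le]
    · obtain ⟨U, hrect, hcov, _, hmult⟩ := hfam s hs
      exact ⟨U, hrect, hcov, hmult⟩
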